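/- The function ξ ↦ √(−log(1 − ξ²)) is integrable on (0,1); that is, ∫_0^1 √(−log(1 − ξ²)) dξ < ∞. Consequently, the cusped soliton u (satisfying u'(x)² = −log(1 − u(x)²) on ℝ \ {0}, with u strictly monotone on each half-line) has finite energy: ∫_ℝ u'(x)² dx = 2∫_0^1 √(−log(1 − ξ²)) dξ < ∞. -/

import Mathlib

/-!
Since `1 - ξ² ≥ 1 - ξ` on `(0, 1)` and `√t ≤ 1 + t`, the integrand is dominated by
`1 - log (1 - ξ)`, which is integrable because `log` is. On `(0, ∞)` the soliton is a
decreasing bijection onto `(0, 1)` with `|u'| = √(-log (1 - u²))`, so the substitution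
`ξ = u x` turns `∫_{x > 0} u'² = ∫_{x > 0} |u'| · |u'|` into `∫_0^1 √(-log (1 - ξ²))`;
evenness of `u` doubles this to the whole line.
-/

open MeasureTheory Filter Set

theorem integrableOn_neg_log_one_sub :
    IntegrableOn (fun x : ℝ => -Real.log (1 - x)) (Ioo 0 1) := by
  have h : IntervalIntegrable (fun x : ℝ => Real.log (1 - x)) volume (1 - 1) (1 - 0) :=
    intervalIntegral.intervalIntegrable_log'.comp_sub_left 1
  simp only [sub_self, sub_zero] at h
  exact ((intervalIntegrable_iff_integrableOn_Ioo_of_le zero_le_one).mp h).neg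

theorem sqrt_neg_log_one_sub_sq_le {x : ℝ} (hx : x ∈ Ioo (0 : ℝ) 1) :
    Real.sqrt (-Real.log (1 - x ^ 2)) ≤ 1 + -Real.log (1 - x) := by
  obtain ⟨hx0, hx1⟩ := hx
  have hpos : 0 < 1 - x ^ 2 := by nlinarith
  have hnonneg : 0 ≤ -Real.log (1 - x ^ 2) :=
    neg_nonneg.mpr (Real.log_nonpos hpos.le (by nlinarith))
  have hlog : -Real.log (1 - x ^ 2) ≤ -Real.log (1 - x) :=
    neg_le_neg (Real.log_le_log (by linarith) (by nlinarith))
  calc Real.sqrt (-Real.log (1 - x ^ 2)) ≤ 1 + -Real.log (1 - x ^ 2) :=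
        (Real.sqrt_le_left (by linarith)).mpr (by nlinarith)
    _ ≤ 1 + -Real.log (1 - x) := by linarith

theorem integrableOn_sqrt_neg_log_one_sub_sq :
    IntegrableOn (fun x : ℝ => Real.sqrt (-Real.log (1 - x ^ 2))) (Ioo 0 1) := by
  refine Integrable.mono'
    ((integrableOn_const (C := (1 : ℝ)) (by simp)).add integrableOn_neg_log_one_sub)
    (Real.measurable_log.comp (by fun_prop)).neg.sqrt.aestronglyMeasurable ?_
  rw [ae_restrict_iff' measurableSet_Ioo]
  refine ae_of_all _ fun x hx => ?_
  rw [Real.norm_of_nonneg (Real.sqrt_nonneg _)]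
  exact sqrt_neg_log_one_sub_sq_le hx

section ChangeOfVariables

variable {s : Set ℝ} {f f' g : ℝ → ℝ}

theorem integrableOn_sq_deriv_iff (hs : MeasurableSet s)
    (hf' : ∀ x ∈ s, HasDerivWithinAt f (f' x) s x) (hf : InjOn f s)
    (hg : ∀ x ∈ s, g (f x) = |f' x|) :
    IntegrableOn (fun x => f' x ^ 2) s ↔ IntegrableOn g (f '' s) := by
  rw [integrableOn_image_iff_integrableOn_abs_deriv_smul hs hf' hf g]
  refine integrableOn_congr_fun (fun x hx => ?_) hs
  rw [hg x hx, smul_eq_mul, abs_mul_abs_self, sq]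

theorem setIntegral_sq_deriv_eq (hs : MeasurableSet s)
    (hf' : ∀ x ∈ s, HasDerivWithinAt f (f' x) s x) (hf : InjOn f s)
    (hg : ∀ x ∈ s, g (f x) = |f' x|) :
    ∫ x in s, f' x ^ 2 = ∫ y in f '' s, g y := by
  rw [integral_image_eq_integral_abs_deriv_smul hs hf' hf g]
  refine setIntegral_congr_fun hs fun x hx => ?_
  rw [hg x hx, smul_eq_mul, abs_mul_abs_self, sq]

end ChangeOfVariables

section Even

variable {f : ℝ → ℝ}

theorem deriv_neg_of_even (hf : ∀ x, f (-x) = f x) (x : ℝ) : deriv f (-x) = -deriv f x := by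
  have h := deriv_comp_neg (f := f) (-x)
  rwa [funext hf, neg_neg] at h

theorem integrable_of_even (hf : ∀ x, f (-x) = f x) (h : IntegrableOn f (Ioi 0)) :
    Integrable f := by
  have hIic : IntegrableOn f (Iic 0) := by
    have hneg : MeasurableEmbedding fun x : ℝ => -x := (Homeomorph.neg ℝ).measurableEmbedding
    rw [← Measure.map_neg_eq_self (volume : Measure ℝ), hneg.integrableOn_map_iff]
    simp only [Function.comp_def, hf, neg_preimage, neg_Iic, neg_zero]
    exact Iff.mpr integrableOn_Ici_iff_integrableOn_Ioi h
  simpa only [Iic_union_Ioi, integrableOn_univ] using hIic.union h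

theorem integral_of_even (hf : ∀ x, f (-x) = f x) : ∫ x, f x = 2 * ∫ x in Ioi 0, f x := by
  rw [← integral_comp_abs]
  congr 1 with x
  rcases abs_choice x with h | h <;> rw [h]
  exact (hf x).symm

end Even

theorem image_Ioi_eq_Ioo_of_tendsto_atTop {f : ℝ → ℝ} {a b c : ℝ}
    (hf : ContinuousOn f (Ici a)) (ha : f a = b) (htop : Tendsto f atTop (nhds c))
    (hmaps : MapsTo f (Ioi a) (Ioo c b)) :
    f '' Ioi a = Ioo c b := by
  refine (image_subset_iff.mpr hmaps).antisymm fun y hy => ?_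
  obtain ⟨X, haX, hXy⟩ := ((eventually_ge_atTop a).and (htop.eventually_lt_const hy.1)).exists
  obtain ⟨x, hx, rfl⟩ := intermediate_value_Icc' haX (hf.mono Icc_subset_Ici_self)
    ⟨hXy.le, ha ▸ hy.2.le⟩
  exact ⟨x, hx.1.lt_of_ne (by rintro rfl; exact hy.2.ne ha), rfl⟩

theorem cusped_soliton_finite_energy_general
    (u : ℝ → ℝ)
    (hcont : Continuous u)
    (heven : ∀ x : ℝ, u (-x) = u x)
    (h0 : u 0 = 1)
    (hrange : ∀ x : ℝ, x ≠ 0 → 0 < u x ∧ u x < 1)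
    (hdecay : Tendsto u (cocompact ℝ) (nhds 0))
    (hsmooth : ContDiffOn ℝ 2 u {(0 : ℝ)}ᶜ)
    (hinv : ∀ x : ℝ, x ≠ 0 → (deriv u x) ^ 2 = -Real.log (1 - u x ^ 2))
    (hanti : StrictAntiOn u (Ici 0)) :
    IntegrableOn (fun ξ : ℝ => Real.sqrt (-Real.log (1 - ξ ^ 2))) (Ioo 0 1) ∧
    Integrable (fun x : ℝ => (deriv u x) ^ 2) ∧
    (∫ x : ℝ, (deriv u x) ^ 2) =
      2 * ∫ ξ in (0 : ℝ)..1, Real.sqrt (-Real.log (1 - ξ ^ 2)) := by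
  set g : ℝ → ℝ := fun ξ => Real.sqrt (-Real.log (1 - ξ ^ 2))
  have hderiv : ∀ x ∈ Ioi (0 : ℝ), HasDerivWithinAt u (deriv u x) (Ioi 0) x := fun x hx =>
    ((hsmooth.differentiableOn two_ne_zero).differentiableAt
      (isOpen_compl_singleton.mem_nhds hx.ne')).hasDerivAt.hasDerivWithinAt
  have hinj : InjOn u (Ioi 0) := hanti.injOn.mono Ioi_subset_Ici_self
  have himage : u '' Ioi 0 = Ioo 0 1 :=
    image_Ioi_eq_Ioo_of_tendsto_atTop hcont.continuousOn h0 (hdecay.mono_left atTop_le_cocompact)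
      fun x hx => hrange x hx.ne'
  have habs : ∀ x ∈ Ioi (0 : ℝ), g (u x) = |deriv u x| := fun x hx => by
    simp only [g]
    rw [← hinv x hx.ne', Real.sqrt_sq_eq_abs]
  have hsq_even : ∀ x : ℝ, deriv u (-x) ^ 2 = deriv u x ^ 2 := fun x => by
    rw [deriv_neg_of_even heven, neg_sq]
  have hIoi := (integrableOn_sq_deriv_iff measurableSet_Ioi hderiv hinj habs).mpr
    (himage ▸ integrableOn_sqrt_neg_log_one_sub_sq)
  refine ⟨integrableOn_sqrt_neg_log_one_sub_sq, integrable_of_even hsq_even hIoi, ?_⟩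
  rw [integral_of_even hsq_even, setIntegral_sq_deriv_eq measurableSet_Ioi hderiv hinj habs, himage,
    intervalIntegral.integral_of_le zero_le_one, integral_Ioc_eq_integral_Ioo]

/-- the function ξ ↦ √(−log(1 − ξ²)) is integrable on (0,1);
consequently the cusped soliton has finite energy:
∫_ℝ u'² dx = 2∫_0^1 √(−log(1 − ξ²)) dξ < ∞, i.e. u ∈ H¹(ℝ). -/
theorem cusped_soliton_finite_energy
    (u : ℝ → ℝ)
    (hcont : Continuous u)
    (heven : ∀ x : ℝ, u (-x) = u x)
    (h0 : u 0 = 1)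
    (hrange : ∀ x : ℝ, x ≠ 0 → 0 < u x ∧ u x < 1)
    (hdecay : Tendsto u (cocompact ℝ) (nhds 0))
    (hsmooth : ContDiffOn ℝ 2 u {(0 : ℝ)}ᶜ)
    (heq : ∀ x : ℝ, x ≠ 0 → (1 - u x ^ 2) * deriv (deriv u) x = u x)
    (hinv : ∀ x : ℝ, x ≠ 0 → (deriv u x) ^ 2 = -Real.log (1 - u x ^ 2))
    (hmono : StrictMonoOn u (Iic 0))
    (hanti : StrictAntiOn u (Ici 0)) :
    IntegrableOn (fun ξ : ℝ => Real.sqrt (-Real.log (1 - ξ ^ 2))) (Ioo 0 1) ∧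
    Integrable (fun x : ℝ => (deriv u x) ^ 2) ∧
    (∫ x : ℝ, (deriv u x) ^ 2) =
      2 * ∫ ξ in (0 : ℝ)..1, Real.sqrt (-Real.log (1 - ξ ^ 2)) :=
  cusped_soliton_finite_energy_general u hcont heven h0 hrange hdecay hsmooth hinv hanti
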